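/- Let L be the language with one binary relation symbol E and two unary relation symbols R and G. Let A be the L-structure with domain {1,2,3}, E = {(1,1),(2,3),(3,2)}, R = {1,2}, G = {1,3}, and let B be the L-structure with the same domain, the same E, and R = {1}, G = {1}. Then A and B satisfy exactly the same positive Horn sentences. -/

import Mathlib

open FirstOrder Language

/-- Positive Horn bounded formulas over a relational language: built from atomic
formulas `R(v₁,…,vₙ)` (relation symbols applied to variables, no equality) using
only conjunction, existential quantification, and universal quantification. -/
inductive IsPH (L : FirstOrder.Language) : ∀ {n : ℕ}, L.BoundedFormula Empty n → Prop
  | rel {n l : ℕ} (R : L.Relations l) (v : Fin l → Fin n) :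
      IsPH L (BoundedFormula.rel R fun i => Term.var (Sum.inr (v i)))
  | inf {n : ℕ} {φ ψ : L.BoundedFormula Empty n} :
      IsPH L φ → IsPH L ψ → IsPH L (φ ⊓ ψ)
  | ex {n : ℕ} {φ : L.BoundedFormula Empty (n + 1)} : IsPH L φ → IsPH L φ.ex
  | all {n : ℕ} {φ : L.BoundedFormula Empty (n + 1)} : IsPH L φ → IsPH L φ.all

/-- `φ` is true in the `L`-structure on `M` given by `S`. -/
def RealizeIn (L : FirstOrder.Language) (M : Type*) (S : L.Structure M)
    (φ : L.Sentence) : Prop :=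
  @FirstOrder.Language.Sentence.Realize L M S φ

/-- Relation symbols: one binary `E` and two unary `R`, `G`. -/
inductive SymERG : ℕ → Type
  | E : SymERG 2
  | R : SymERG 1
  | G : SymERG 1

/-- The relational language with one binary relation symbol `E` and two unary
relation symbols `R` and `G`. -/
def Lerg : FirstOrder.Language := ⟨fun _ => Empty, SymERG⟩

/-- The structure `A` on domain `{1,2,3}` (encoded as `Fin 3`, with `0,1,2` standing
for `1,2,3`): `E = {(1,1),(2,3),(3,2)}`, `R = {1,2}`, `G = {1,3}`. -/
def strA : Lerg.Structure (Fin 3) where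
  funMap := fun f _ => Empty.elim f
  RelMap := fun S x =>
    match S, x with
    | SymERG.E, x => (x 0 = 0 ∧ x 1 = 0) ∨ (x 0 = 1 ∧ x 1 = 2) ∨ (x 0 = 2 ∧ x 1 = 1)
    | SymERG.R, x => x 0 = 0 ∨ x 0 = 1
    | SymERG.G, x => x 0 = 0 ∨ x 0 = 2

/-- The structure `B` on the same domain with the same `E` and `R = {1}`, `G = {1}`. -/
def strB : Lerg.Structure (Fin 3) where
  funMap := fun f _ => Empty.elim f
  RelMap := fun S x =>
    match S, x with
    | SymERG.E, x => (x 0 = 0 ∧ x 1 = 0) ∨ (x 0 = 1 ∧ x 1 = 2) ∨ (x 0 = 2 ∧ x 1 = 1)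
    | SymERG.R, x => x 0 = 0
    | SymERG.G, x => x 0 = 0

/-! Positive Horn sentences are preserved by direct products and by surjective homomorphisms.
Since the relations of `B` are contained in those of `A`, the identity is a surjective
homomorphism `B → A`; conversely `B` is a surjective homomorphic image of `A × A`. Hence each
of `A` and `B` satisfies every positive Horn sentence true in the other. -/

namespace FirstOrder.Language

variable {L : Language} {M N : Type*} [L.Structure M] [L.Structure N]

instance prodStructure : L.Structure (M × N) where
  funMap f x := (Structure.funMap f (Prod.fst ∘ x), Structure.funMap f (Prod.snd ∘ x))
  RelMap r x := Structure.RelMap r (Prod.fst ∘ x) ∧ Structure.RelMap r (Prod.snd ∘ x)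

end FirstOrder.Language

namespace IsPH

open FirstOrder.Language

variable {L : Language} {M N : Type*} [L.Structure M] [L.Structure N]

theorem realize_of_surjective_hom (f : M →[L] N) (hf : Function.Surjective f) {n : ℕ}
    {φ : L.BoundedFormula Empty n} (hφ : IsPH L φ) {v : Empty → M} {xs : Fin n → M}
    (h : φ.Realize v xs) : φ.Realize (f ∘ v) (f ∘ xs) := by
  induction hφ with
  | rel R w => exact f.map_rel R _ h
  | inf _ _ ih₁ ih₂ =>
    rw [BoundedFormula.realize_inf] at h ⊢
    exact ⟨ih₁ h.1, ih₂ h.2⟩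
  | ex _ ih =>
    rw [BoundedFormula.realize_ex] at h ⊢
    obtain ⟨a, ha⟩ := h
    exact ⟨f a, by simpa [Fin.comp_snoc] using ih ha⟩
  | all _ ih =>
    rw [BoundedFormula.realize_all] at h ⊢
    intro b
    obtain ⟨a, rfl⟩ := hf b
    simpa [Fin.comp_snoc] using ih (h a)

theorem realize_prod {n : ℕ} {φ : L.BoundedFormula Empty n} (hφ : IsPH L φ)
    {v : Empty → M × N} {xs : Fin n → M × N}
    (h₁ : φ.Realize (Prod.fst ∘ v) (Prod.fst ∘ xs))
    (h₂ : φ.Realize (Prod.snd ∘ v) (Prod.snd ∘ xs)) : φ.Realize v xs := by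
  induction hφ with
  | rel R w => exact ⟨h₁, h₂⟩
  | inf _ _ ih₁ ih₂ =>
    rw [BoundedFormula.realize_inf] at h₁ h₂ ⊢
    exact ⟨ih₁ h₁.1 h₂.1, ih₂ h₁.2 h₂.2⟩
  | ex _ ih =>
    rw [BoundedFormula.realize_ex] at h₁ h₂ ⊢
    obtain ⟨a, ha⟩ := h₁
    obtain ⟨b, hb⟩ := h₂
    exact ⟨(a, b), ih (by simpa [Fin.comp_snoc] using ha) (by simpa [Fin.comp_snoc] using hb)⟩
  | all _ ih =>
    rw [BoundedFormula.realize_all] at h₁ h₂ ⊢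
    intro c
    exact ih (by simpa [Fin.comp_snoc] using h₁ c.1) (by simpa [Fin.comp_snoc] using h₂ c.2)

theorem realize_sentence_of_surjective_hom (f : M →[L] N) (hf : Function.Surjective f)
    {φ : L.Sentence} (hφ : IsPH L φ) (h : M ⊨ φ) : N ⊨ φ := by
  have := hφ.realize_of_surjective_hom f hf (v := default) (xs := default) h
  rwa [Unique.eq_default (f ∘ _), Unique.eq_default (f ∘ _)] at this

theorem realize_sentence_prod {φ : L.Sentence} (hφ : IsPH L φ) (h₁ : M ⊨ φ) (h₂ : N ⊨ φ) :
    (M × N) ⊨ φ := by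
  refine hφ.realize_prod (v := default) (xs := default) ?_ ?_ <;>
    rwa [Unique.eq_default (_ ∘ _), Unique.eq_default (_ ∘ _)]

end IsPH

open FirstOrder.Language

def ModelA : Type := Fin 3

def ModelB : Type := Fin 3

instance : Lerg.Structure ModelA := strA

instance : Lerg.Structure ModelB := strB

def homBA : ModelB →[Lerg] ModelA where
  toFun := id
  map_fun' f := Empty.elim f
  map_rel' r x h := by
    cases r
    · exact h
    · exact Or.inl h
    · exact Or.inl h

/-- The 2-cycle `{(2,3), (3,2)}` of `A × A` carries neither `R` nor `G`; it is sent onto the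
2-cycle `{2, 3}` of `B`, and everything else onto the looped vertex `1`, where `R` and `G`
hold (in the `Fin 3` encoding `0, 1, 2` stand for `1, 2, 3`). -/
def foldPair : Fin 3 × Fin 3 → Fin 3
  | (1, 2) => 1
  | (2, 1) => 2
  | _ => 0

theorem foldPair_surjective : Function.Surjective foldPair := by decide

theorem foldPair_map_rel {l : ℕ} (r : SymERG l) (x : Fin l → Fin 3 × Fin 3) :
    strA.RelMap r (Prod.fst ∘ x) → strA.RelMap r (Prod.snd ∘ x) →
      strB.RelMap r (foldPair ∘ x) := by
  cases r <;> revert x <;> delta strA strB <;> dsimp only <;> decide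

def homAAB : ModelA × ModelA →[Lerg] ModelB where
  toFun := foldPair
  map_fun' f := Empty.elim f
  map_rel' r x h := foldPair_map_rel r x h.1 h.2

/-- The structures `A` and `B` satisfy exactly the same positive Horn sentences. -/
theorem stmt12 (φ : Lerg.Sentence) (hφ : IsPH Lerg φ) :
    RealizeIn Lerg (Fin 3) strA φ ↔ RealizeIn Lerg (Fin 3) strB φ := by
  change ModelA ⊨ φ ↔ ModelB ⊨ φ
  constructor
  · intro hA
    exact hφ.realize_sentence_of_surjective_hom homAAB foldPair_surjective
      (hφ.realize_sentence_prod hA hA)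
  · exact hφ.realize_sentence_of_surjective_hom homBA Function.surjective_id
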